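/- (Entanglement-assisted No-Free-Lunch theorem for learning linear optical unitaries from entangled coherent-Fock training data.) Let m ≥ 1 and let r, s ≥ 1 be integers with r·s ≤ 2m. Fix any O ∈ O(2m). For Y ∈ O(2m − rs), let T_Y := (I_{rs} ⊕ Y)·O ∈ O(2m); these correspond to a learner whose output agrees with the target O on the rs-dimensional subspace spanned by the rs linearly independent mean vectors appearing in s entangled coherent-Fock training states of rank r. Then ∫_{O(2m−rs)} R_O(T_Y) dμ(Y) = 1/2 − rs/(4m), where R_O(T) = 1/2 − Tr(T Oᵀ)/(4m). -/

import Mathlib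

open MeasureTheory Matrix

instance matrixMeasurableSpace (n m : ℕ) : MeasurableSpace (Matrix (Fin n) (Fin m) ℝ) :=
  MeasurableSpace.pi

instance matrixBorelSpace (n m : ℕ) : BorelSpace (Matrix (Fin n) (Fin m) ℝ) :=
  Pi.borelSpace

/-!
Since `O Oᵀ = 1`, the trace of `(I_{rs} ⊕ Y) O Oᵀ` is `rs + Tr Y`, so the claim reduces to
`∫ Tr Y dμ = 0`. That integral is its own negative: the Haar integral is invariant under
left multiplication by `-1 ∈ O(n)`, which negates the trace.
-/

namespace Matrix

variable {l m n R : Type*} [Fintype l] [Fintype m] [Fintype n]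

theorem trace_reindex [AddCommMonoid R] (e : m ≃ n) (A : Matrix m m R) :
    (reindex e e A).trace = A.trace := by
  simp only [trace, diag, reindex_apply, submatrix_apply]
  exact e.symm.sum_comp fun i => A i i

theorem trace_fromBlocks [AddCommMonoid R] (A : Matrix l l R) (B : Matrix l m R)
    (C : Matrix m l R) (D : Matrix m m R) :
    (fromBlocks A B C D).trace = A.trace + D.trace := by
  simp [trace, Fintype.sum_sum_type]

variable [DecidableEq n] {𝕜 : Type*} [RCLike 𝕜]

theorem isCompact_unitaryGroup : IsCompact (unitaryGroup n 𝕜 : Set (Matrix n n 𝕜)) := by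
  have hball : IsCompact (Set.univ.pi fun _ : n => Set.univ.pi fun _ : n =>
      Metric.closedBall (0 : 𝕜) 1) :=
    isCompact_univ_pi fun _ => isCompact_univ_pi fun _ => isCompact_closedBall 0 1
  refine hball.of_isClosed_subset (isClosed_unitary (R := Matrix n n 𝕜)) fun U hU i _ j _ => ?_
  simpa using entry_norm_bound_of_unitary hU i j

instance : CompactSpace (unitaryGroup n 𝕜) :=
  isCompact_iff_compactSpace.mp isCompact_unitaryGroup

section Haar

variable [MeasurableSpace (unitaryGroup n 𝕜)] (μ : Measure (unitaryGroup n 𝕜))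

theorem integrable_trace_unitaryGroup [OpensMeasurableSpace (unitaryGroup n 𝕜)]
    [IsFiniteMeasure μ] :
    Integrable (fun U : unitaryGroup n 𝕜 => (U : Matrix n n 𝕜).trace) μ :=
  (continuous_subtype_val.matrix_trace).integrable_of_hasCompactSupport
    (HasCompactSupport.of_compactSpace _)

theorem integral_trace_unitaryGroup [MeasurableMul (unitaryGroup n 𝕜)]
    [μ.IsMulLeftInvariant] :
    ∫ U : unitaryGroup n 𝕜, (U : Matrix n n 𝕜).trace ∂μ = 0 := by
  have h := integral_mul_left_eq_self (μ := μ)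
    (fun U : unitaryGroup n 𝕜 => (U : Matrix n n 𝕜).trace) (-1)
  simp only [neg_mul, one_mul, Unitary.coe_neg, trace_neg, integral_neg] at h
  exact neg_eq_self.mp h

end Haar

end Matrix

instance orthogonalGroup.borelSpace (n : ℕ) : BorelSpace (orthogonalGroup (Fin n) ℝ) :=
  Subtype.borelSpace _

theorem nfl_linear_optical_entangled_coherent_fock_general
    (m r s : ℕ) (hrs : r * s ≤ 2 * m)
    (O : Matrix (Fin (2 * m)) (Fin (2 * m)) ℝ)
    (hO : O ∈ Matrix.orthogonalGroup (Fin (2 * m)) ℝ)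
    (μ : Measure (Matrix.orthogonalGroup (Fin (2 * m - r * s)) ℝ))
    [μ.IsHaarMeasure] [IsProbabilityMeasure μ] :
    ∫ Y, (1 / 2 -
        ((Matrix.reindex (finSumFinEquiv.trans (finCongr (Nat.add_sub_cancel' hrs)))
            (finSumFinEquiv.trans (finCongr (Nat.add_sub_cancel' hrs)))
            (Matrix.fromBlocks (1 : Matrix (Fin (r * s)) (Fin (r * s)) ℝ) 0 0
              ((Y : Matrix (Fin (2 * m - r * s)) (Fin (2 * m - r * s)) ℝ)))) * O * Oᵀ).trace /
          (4 * m)) ∂μ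
      = 1 / 2 - (r * s : ℝ) / (4 * m) := by
  have hOOt : O * Oᵀ = 1 := (mem_orthogonalGroup_iff _ _).mp hO
  simp_rw [mul_assoc, hOOt, mul_one, trace_reindex, trace_fromBlocks, trace_one,
    Fintype.card_fin, add_div, ← sub_sub]
  rw [integral_sub (integrable_const _) ((integrable_trace_unitaryGroup μ).div_const _),
    integral_div, integral_trace_unitaryGroup, integral_const, probReal_univ]
  push_cast
  ring

/-- **Entanglement-assisted No-Free-Lunch theorem for learning linear optical
unitaries from entangled coherent-Fock training data.**
Let `m ≥ 1` and `r, s ≥ 1` with `r·s ≤ 2m`, and fix a target `O ∈ O(2m)`.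
For `Y ∈ O(2m − rs)`, the hypothesis `T_Y := (I_{rs} ⊕ Y) · O` agrees with `O`
on the `rs`-dimensional subspace spanned by the `rs` linearly independent mean
vectors appearing in `s` entangled coherent-Fock training states of rank `r`.
Averaging the risk `R_O(T) = 1/2 − Tr(T Oᵀ)/(4m)` over the Haar probability
measure on `O(2m − rs)` gives `1/2 − rs/(4m)`. -/
theorem nfl_linear_optical_entangled_coherent_fock
    (m r s : ℕ) (hm : 1 ≤ m) (hr : 1 ≤ r) (hs : 1 ≤ s) (hrs : r * s ≤ 2 * m)
    (O : Matrix (Fin (2 * m)) (Fin (2 * m)) ℝ)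
    (hO : O ∈ Matrix.orthogonalGroup (Fin (2 * m)) ℝ)
    (μ : Measure (Matrix.orthogonalGroup (Fin (2 * m - r * s)) ℝ))
    [μ.IsHaarMeasure] [IsProbabilityMeasure μ] :
    ∫ Y, (1 / 2 -
        ((Matrix.reindex (finSumFinEquiv.trans (finCongr (Nat.add_sub_cancel' hrs)))
            (finSumFinEquiv.trans (finCongr (Nat.add_sub_cancel' hrs)))
            (Matrix.fromBlocks (1 : Matrix (Fin (r * s)) (Fin (r * s)) ℝ) 0 0
              ((Y : Matrix (Fin (2 * m - r * s)) (Fin (2 * m - r * s)) ℝ)))) * O * Oᵀ).trace /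
          (4 * m)) ∂μ
      = 1 / 2 - (r * s : ℝ) / (4 * m) :=
  nfl_linear_optical_entangled_coherent_fock_general m r s hrs O hO μ
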